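/- arXiv:1502.06742 — 2 statements merged into one kernel-verified Lean document; each statement's English description precedes it below -/
import Mathlib

section
/- Consider a piecewise linear curve consisting of n segments each of length ℓ, with a corner (forcing zero velocity) at each of the n−1 junctions and at the endpoints. Any C² traversal s with ‖s'‖ ≤ α, ‖s''‖ ≤ β, and s'(tᵢ) = 0 at all junction times tᵢ requires total time T ≥ n·min(2√(ℓ/β), ℓ/α + α/β). -/
open Set

/-!
Between two rests the speed is at most `β` times the time to the nearer rest, so on a segment of
duration `τ` the speed lies under a tent of height `βτ/2` and the displacement `ℓ` is at most its
area `βτ²/4`. Hence each segment lasts at least `2√(ℓ/β)`, which dominates the minimum in the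
bound, and the `n` segment durations add up to `T`.
-/

variable {E : Type*} [NormedAddCommGroup E] [NormedSpace ℝ E]

theorem norm_sub_le_sub_of_norm_deriv_le {f : ℝ → E} {g g' : ℝ → ℝ} {a b : ℝ} (hab : a ≤ b)
    (hf : Differentiable ℝ f) (hg : ∀ x, HasDerivAt g (g' x) x)
    (bound : ∀ x ∈ Ico a b, ‖deriv f x‖ ≤ g' x) : ‖f b - f a‖ ≤ g b - g a :=
  image_norm_le_of_norm_deriv_right_le_deriv_boundary (f := fun x ↦ f x - f a)
    (hf.continuous.sub continuous_const).continuousOn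
    (fun x _ ↦ ((hf x).hasDerivAt.sub_const (f a)).hasDerivWithinAt)
    (by simp) (fun x ↦ (hg x).sub_const (g a)) bound (right_mem_Icc.mpr hab)

theorem norm_sub_le_of_norm_deriv_le_mul_sub_left {f : ℝ → E} {a b β : ℝ} (hab : a ≤ b)
    (hf : Differentiable ℝ f) (bound : ∀ x ∈ Ico a b, ‖deriv f x‖ ≤ β * (x - a)) :
    ‖f b - f a‖ ≤ β * (b - a) ^ 2 / 2 := by
  have hg : ∀ x, HasDerivAt (fun x ↦ β * (x - a) ^ 2 / 2) (β * (x - a)) x := fun x ↦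
    ((((hasDerivAt_id' x).sub_const a).pow 2).const_mul β |>.div_const 2).congr_deriv
      (by ring)
  simpa using norm_sub_le_sub_of_norm_deriv_le hab hf hg bound

theorem norm_sub_le_of_norm_deriv_le_mul_sub_right {f : ℝ → E} {a b β : ℝ} (hab : a ≤ b)
    (hf : Differentiable ℝ f) (bound : ∀ x ∈ Ico a b, ‖deriv f x‖ ≤ β * (b - x)) :
    ‖f b - f a‖ ≤ β * (b - a) ^ 2 / 2 := by
  have hg : ∀ x, HasDerivAt (fun x ↦ -(β * (b - x) ^ 2 / 2)) (β * (b - x)) x := fun x ↦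
    ((((hasDerivAt_id' x).const_sub b).pow 2).const_mul β |>.div_const 2).fun_neg.congr_deriv
      (by ring)
  simpa using norm_sub_le_sub_of_norm_deriv_le hab hf hg bound

theorem norm_sub_le_of_rest_to_rest {s : ℝ → E} {a b β : ℝ} (hs : ContDiff ℝ 2 s) (hab : a ≤ b)
    (haccel : ∀ τ ∈ Icc a b, ‖deriv (deriv s) τ‖ ≤ β)
    (ha : deriv s a = 0) (hb : deriv s b = 0) : ‖s b - s a‖ ≤ β * (b - a) ^ 2 / 4 := by
  have hs' : Differentiable ℝ s := hs.differentiable two_ne_zero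
  have hv : Differentiable ℝ (deriv s) := (hs.iterate_deriv' 1 1).differentiable one_ne_zero
  have hdist : ∀ x ∈ Icc a b, ∀ y ∈ Icc a b, ‖deriv s x - deriv s y‖ ≤ β * ‖x - y‖ :=
    fun x hx y hy ↦ (convex_Icc a b).norm_image_sub_le_of_norm_deriv_le
      (fun z _ ↦ hv z) haccel hy hx
  obtain ⟨m, hma, hbm⟩ : ∃ m, m - a = (b - a) / 2 ∧ b - m = (b - a) / 2 :=
    ⟨(a + b) / 2, by ring, by ring⟩
  have ham : a ≤ m := by linarith
  have hmb : m ≤ b := by linarith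
  have hleft : ‖s m - s a‖ ≤ β * (m - a) ^ 2 / 2 := by
    refine norm_sub_le_of_norm_deriv_le_mul_sub_left ham hs' fun x hx ↦ ?_
    simpa [ha, abs_of_nonneg (sub_nonneg.mpr hx.1)] using
      hdist x ⟨hx.1, hx.2.le.trans hmb⟩ a (left_mem_Icc.mpr hab)
  have hright : ‖s b - s m‖ ≤ β * (b - m) ^ 2 / 2 := by
    refine norm_sub_le_of_norm_deriv_le_mul_sub_right hmb hs' fun x hx ↦ ?_
    simpa [hb, abs_sub_comm x b, abs_of_nonneg (sub_nonneg.mpr hx.2.le)] using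
      hdist x ⟨ham.trans hx.1, hx.2.le⟩ b (right_mem_Icc.mpr hab)
  calc ‖s b - s a‖ ≤ ‖s b - s m‖ + ‖s m - s a‖ := norm_sub_le_norm_sub_add_norm_sub _ _ _
    _ ≤ β * (b - a) ^ 2 / 4 := by rw [hma] at hleft; rw [hbm] at hright; linarith

theorem two_mul_sqrt_div_le_of_rest_to_rest {s : ℝ → E} {a b β : ℝ} (hβ : 0 < β)
    (hs : ContDiff ℝ 2 s) (hab : a ≤ b) (haccel : ∀ τ ∈ Icc a b, ‖deriv (deriv s) τ‖ ≤ β)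
    (ha : deriv s a = 0) (hb : deriv s b = 0) : 2 * √(‖s b - s a‖ / β) ≤ b - a := by
  have hdisp := norm_sub_le_of_rest_to_rest hs hab haccel ha hb
  have : √(‖s b - s a‖ / β) ≤ (b - a) / 2 := by
    rw [Real.sqrt_le_left (by linarith), div_le_iff₀ hβ]
    linarith
  linarith

theorem Fin.mul_le_sub_zero_of_le_succ_sub {n : ℕ} {t : Fin (n + 1) → ℝ} {c : ℝ}
    (h : ∀ i : Fin n, c ≤ t i.succ - t i.castSucc) (i : Fin (n + 1)) : i * c ≤ t i - t 0 := by
  induction i using Fin.induction with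
  | zero => simp
  | succ i ih =>
    rw [Fin.val_succ, Nat.cast_succ, add_one_mul]
    rw [Fin.val_castSucc] at ih
    linarith [h i]

theorem piecewise_linear_traversal_time_bound_general (T : ℝ) (d n : ℕ)
    (ℓ α β : ℝ) (hβ : 0 < β)
    (s : ℝ → EuclideanSpace ℝ (Fin d)) (hs : ContDiff ℝ 2 s)
    (t : Fin (n + 1) → ℝ) (hmono : Monotone t)
    (ht0 : t 0 = 0) (htn : t (Fin.last n) = T)
    (haccel : ∀ τ ∈ Icc (0 : ℝ) T, ‖deriv (deriv s) τ‖ ≤ β)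
    (hrest : ∀ i : Fin (n + 1), deriv s (t i) = 0)
    (hseg : ∀ i : Fin n, ‖s (t i.succ) - s (t i.castSucc)‖ = ℓ) :
    T ≥ n * min (2 * Real.sqrt (ℓ / β)) (ℓ / α + α / β) := by
  have hrange : ∀ i, t i ∈ Icc 0 T := fun i ↦
    ⟨ht0 ▸ hmono (Fin.zero_le i), htn ▸ hmono (Fin.le_last i)⟩
  have hsegtime : ∀ i : Fin n, 2 * √(ℓ / β) ≤ t i.succ - t i.castSucc := fun i ↦ by
    rw [← hseg i]
    exact two_mul_sqrt_div_le_of_rest_to_rest hβ hs (hmono i.castSucc_le_succ)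
      (fun τ hτ ↦ haccel τ ⟨(hrange _).1.trans hτ.1, hτ.2.trans (hrange _).2⟩)
      (hrest _) (hrest _)
  calc n * min (2 * √(ℓ / β)) (ℓ / α + α / β) ≤ n * (2 * √(ℓ / β)) := by
        gcongr; exact min_le_left _ _
    _ ≤ T := by simpa [ht0, htn] using Fin.mul_le_sub_zero_of_le_succ_sub hsegtime (Fin.last n)

theorem piecewise_linear_traversal_time_bound (T : ℝ) (d n : ℕ) (hn : 1 ≤ n)
    (ℓ α β : ℝ) (hℓ : 0 < ℓ) (hα : 0 < α) (hβ : 0 < β)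
    (s : ℝ → EuclideanSpace ℝ (Fin d)) (hs : ContDiff ℝ 2 s)
    (t : Fin (n + 1) → ℝ) (hmono : Monotone t)
    (ht0 : t 0 = 0) (htn : t (Fin.last n) = T)
    (hspeed : ∀ τ ∈ Icc (0 : ℝ) T, ‖deriv s τ‖ ≤ α)
    (haccel : ∀ τ ∈ Icc (0 : ℝ) T, ‖deriv (deriv s) τ‖ ≤ β)
    (hrest : ∀ i : Fin (n + 1), deriv s (t i) = 0)
    (hseg : ∀ i : Fin n, ‖s (t i.succ) - s (t i.castSucc)‖ = ℓ) :
    T ≥ n * min (2 * Real.sqrt (ℓ / β)) (ℓ / α + α / β) :=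
  piecewise_linear_traversal_time_bound_general T d n ℓ α β hβ s hs t hmono ht0 htn haccel hrest
    hseg
end

section
/- For a 1D rest-to-rest motion with both constraints: if x : [0,T] → ℝ is C² with x(0)=0, x(T)=ℓ, x'(0)=x'(T)=0, |x'(t)| ≤ α and |x''(t)| ≤ β for all t, and ℓ ≥ α²/β, then T ≥ ℓ/α + α/β. -/
/-!
The velocity `v = x'` starts and ends at rest and changes at rate at most `β`, so on `[0, T]` it
lies below the trapezoid `min (α, β t, β (T - t))`. Integrating, for every `0 ≤ c ≤ T / 2`,
`ℓ ≤ β c² + α (T - 2c)`. The choice `c = T / 2` gives `ℓ ≤ β T² / 4`, which together with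
`ℓ ≥ α² / β` forces `T ≥ 2α / β`; then `c = α / β` is admissible and gives `ℓ ≤ α T - α² / β`.
-/

open Set intervalIntegral

theorem le_mul_abs_sub_of_abs_deriv_le {v : ℝ → ℝ} {β T s t : ℝ} (hv : Differentiable ℝ v)
    (hβ : ∀ u ∈ Icc 0 T, |deriv v u| ≤ β) (hs : s ∈ Icc 0 T) (hvs : v s = 0) (ht : t ∈ Icc 0 T) :
    v t ≤ β * |t - s| := by
  have := (convex_Icc 0 T).norm_image_sub_le_of_norm_deriv_le (fun u _ => hv u) hβ hs ht
  rw [hvs, sub_zero] at this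
  exact (le_abs_self _).trans this

theorem integral_le_of_le_mul_self {v : ℝ → ℝ} {β c : ℝ} (hv : Continuous v) (hc : 0 ≤ c)
    (h : ∀ t ∈ Icc 0 c, v t ≤ β * t) : ∫ t in 0..c, v t ≤ β * c ^ 2 / 2 :=
  calc ∫ t in 0..c, v t ≤ ∫ t in 0..c, β * t :=
        integral_mono_on hc (hv.intervalIntegrable _ _)
          ((continuous_const_mul β).intervalIntegrable _ _) h
    _ = β * c ^ 2 / 2 := by rw [integral_const_mul, integral_id]; ring

theorem integral_le_trapezoid {v : ℝ → ℝ} {α β T c : ℝ} (hv : Continuous v) (hc : 0 ≤ c)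
    (hcT : 2 * c ≤ T) (hα : ∀ t ∈ Icc 0 T, v t ≤ α) (hβ₀ : ∀ t ∈ Icc 0 T, v t ≤ β * t)
    (hβT : ∀ t ∈ Icc 0 T, v t ≤ β * (T - t)) :
    ∫ t in 0..T, v t ≤ β * c ^ 2 + α * (T - 2 * c) := by
  have hint : ∀ a b, IntervalIntegrable v MeasureTheory.volume a b :=
    fun a b => hv.intervalIntegrable a b
  have accel : ∫ t in 0..c, v t ≤ β * c ^ 2 / 2 :=
    integral_le_of_le_mul_self hv hc fun t ht => hβ₀ t ⟨ht.1, by linarith [ht.2]⟩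
  have cruise : ∫ t in c..T - c, v t ≤ α * (T - 2 * c) :=
    calc ∫ t in c..T - c, v t ≤ ∫ _ in c..T - c, α :=
          integral_mono_on (by linarith) (hint _ _) intervalIntegrable_const
            fun t ht => hα t ⟨hc.trans ht.1, by linarith [ht.2]⟩
      _ = α * (T - 2 * c) := by rw [integral_const, smul_eq_mul]; ring
  have decel : ∫ t in T - c..T, v t ≤ β * c ^ 2 / 2 := by
    rw [show ∫ t in T - c..T, v t = ∫ t in 0..c, v (T - t) by simp [integral_comp_sub_left]]
    exact integral_le_of_le_mul_self (by fun_prop) hc fun t ht =>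
      (hβT (T - t) ⟨by linarith [ht.2], by linarith [ht.1]⟩).trans_eq (by ring)
  rw [← integral_add_adjacent_intervals (hint 0 (T - c)) (hint (T - c) T),
    ← integral_add_adjacent_intervals (hint 0 c) (hint c (T - c))]
  linarith

theorem rest_to_rest_time_bound_trapezoidal_general (T ℓ α β : ℝ)
    (hα : 0 < α) (hβ : 0 < β) (hT : 0 ≤ T)
    (hlong : ℓ ≥ α ^ 2 / β)
    (x : ℝ → ℝ) (hx : ContDiff ℝ 2 x)
    (hx0 : x 0 = 0) (hxT : x T = ℓ)
    (hv0 : deriv x 0 = 0) (hvT : deriv x T = 0)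
    (hspeed : ∀ t ∈ Icc (0 : ℝ) T, |deriv x t| ≤ α)
    (haccel : ∀ t ∈ Icc (0 : ℝ) T, |deriv (deriv x) t| ≤ β) :
    T ≥ ℓ / α + α / β := by
  have hxd : Differentiable ℝ x := hx.differentiable (by norm_num)
  have hvd : Differentiable ℝ (deriv x) := hx.differentiable_deriv_two
  have hdist : ∫ t in 0..T, deriv x t = ℓ := by
    rw [integral_deriv_eq_sub (fun t _ => hxd t) (hvd.continuous.intervalIntegrable 0 T), hxT,
      hx0, sub_zero]
  have hv_le_speed : ∀ t ∈ Icc 0 T, deriv x t ≤ α := fun t ht => (abs_le.mp (hspeed t ht)).2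
  have hv_le_start : ∀ t ∈ Icc 0 T, deriv x t ≤ β * t := fun t ht =>
    (le_mul_abs_sub_of_abs_deriv_le hvd haccel ⟨le_rfl, hT⟩ hv0 ht).trans_eq
      (by rw [sub_zero, abs_of_nonneg ht.1])
  have hv_le_stop : ∀ t ∈ Icc 0 T, deriv x t ≤ β * (T - t) := fun t ht =>
    (le_mul_abs_sub_of_abs_deriv_le hvd haccel ⟨hT, le_rfl⟩ hvT ht).trans_eq
      (by rw [abs_sub_comm, abs_of_nonneg (sub_nonneg.mpr ht.2)])
  have key : ∀ c, 0 ≤ c → 2 * c ≤ T → ℓ ≤ β * c ^ 2 + α * (T - 2 * c) := fun c hc hcT =>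
    hdist ▸ integral_le_trapezoid hvd.continuous hc hcT hv_le_speed hv_le_start hv_le_stop
  have hβℓ : α ^ 2 ≤ β * ℓ := by rwa [ge_iff_le, div_le_iff₀ hβ, mul_comm] at hlong
  have hTlong : 2 * α ≤ β * T := by
    have hhalf := key (T / 2) (by linarith) (by linarith)
    have hsq : (2 * α) ^ 2 ≤ (β * T) ^ 2 := by nlinarith
    exact (pow_le_pow_iff_left₀ (by positivity) (by positivity) two_ne_zero).mp hsq
  have hcruise := key (α / β) (by positivity) (by rw [← mul_div_assoc, div_le_iff₀ hβ]; linarith)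
  rw [ge_iff_le, div_add_div _ _ hα.ne' hβ.ne', div_le_iff₀ (by positivity)]
  field_simp at hcruise
  nlinarith

theorem rest_to_rest_time_bound_trapezoidal (T ℓ α β : ℝ)
    (hℓ : 0 < ℓ) (hα : 0 < α) (hβ : 0 < β) (hT : 0 ≤ T)
    (hlong : ℓ ≥ α ^ 2 / β)
    (x : ℝ → ℝ) (hx : ContDiff ℝ 2 x)
    (hx0 : x 0 = 0) (hxT : x T = ℓ)
    (hv0 : deriv x 0 = 0) (hvT : deriv x T = 0)
    (hspeed : ∀ t ∈ Icc (0 : ℝ) T, |deriv x t| ≤ α)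
    (haccel : ∀ t ∈ Icc (0 : ℝ) T, |deriv (deriv x) t| ≤ β) :
    T ≥ ℓ / α + α / β :=
  rest_to_rest_time_bound_trapezoidal_general T ℓ α β hα hβ hT hlong x hx hx0 hxT hv0 hvT hspeed
    haccel
end
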